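/- arXiv:math/0306073 — 2 statements merged into one kernel-verified Lean document; each statement's English description precedes it below -/
import Mathlib

section
/- Let $H$ be a finite-dimensional complex inner product space and let $h$ be a positive self-adjoint operator on $H$. For $0 < \sigma \leq 1$ and any operator $T$ on $H$ (thought of as $\partial_0 h^\sigma$ in the geometric application), the following algebraic inequality holds for commuting derivations: if $h = \sum_i \lambda_i P_i$ is the spectral decomposition with eigenvalues $\lambda_i > 0$ and orthogonal projections $P_i$, and $D$ is a derivation-like operator with $D(h^\sigma) = \sum_{i,j} \frac{\lambda_i^\sigma - \lambda_j^\sigma}{\lambda_i - \lambda_j} P_i D(h) P_j$ (difference quotient interpreted as $\sigma\lambda_i^{\sigma-1}$ when $i = j$), then $\|h^{-\sigma/2} D(h^\sigma)\|^2 \leq \mathrm{Re}\,\langle h^{-1} D(h), D(h^\sigma) \rangle$, where $\langle A, B\rangle = \mathrm{Tr}(A B^*)$ is the Hilbert–Schmidt inner product. -/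
open Matrix

lemma uy_dq_nonneg {a b σ : ℝ} (ha : 0 < a) (hb : 0 < b) (hσ0 : 0 < σ) :
    0 ≤ (if a = b then σ * a ^ (σ - 1) else (a ^ σ - b ^ σ) / (a - b)) := by
  split_ifs with h
  · positivity
  · rcases lt_or_gt_of_ne h with hlt | hlt
    · rw [div_nonneg_iff]
      right
      constructor
      · rw [sub_nonpos]; exact Real.rpow_le_rpow ha.le hlt.le hσ0.le
      · linarith
    · apply div_nonneg
      · rw [sub_nonneg]; exact Real.rpow_le_rpow hb.le hlt.le hσ0.le
      · linarith

lemma uy_dq_le {a b σ : ℝ} (ha : 0 < a) (hb : 0 < b) (hσ0 : 0 < σ) (hσ1 : σ ≤ 1) :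
    (if a = b then σ * a ^ (σ - 1) else (a ^ σ - b ^ σ) / (a - b)) ≤ a ^ (σ - 1) := by
  have ha1 : a ^ (σ - 1) * a = a ^ σ := by
    rw [← Real.rpow_add_one ha.ne']; ring_nf
  have hb1 : b ^ (σ - 1) * b = b ^ σ := by
    rw [← Real.rpow_add_one hb.ne']; ring_nf
  split_ifs with h
  · nlinarith [Real.rpow_pos_of_pos ha (σ - 1)]
  · rcases lt_or_gt_of_ne h with hlt | hlt
    · rw [div_le_iff_of_neg (by linarith)]
      have h1 : b ^ (σ - 1) ≤ a ^ (σ - 1) :=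
        Real.rpow_le_rpow_of_nonpos ha hlt.le (by linarith)
      nlinarith
    · rw [div_le_iff₀ (by linarith)]
      have h1 : a ^ (σ - 1) ≤ b ^ (σ - 1) :=
        Real.rpow_le_rpow_of_nonpos hb hlt.le (by linarith)
      nlinarith

lemma uy_scalar {a b σ : ℝ} (ha : 0 < a) (hb : 0 < b) (hσ0 : 0 < σ) (hσ1 : σ ≤ 1) :
    (a ^ (-(σ/2)) * a ^ (-(σ/2))) *
      ((if a = b then σ * a ^ (σ - 1) else (a ^ σ - b ^ σ) / (a - b)) *
       (if a = b then σ * a ^ (σ - 1) else (a ^ σ - b ^ σ) / (a - b)))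
      ≤ a⁻¹ * (if a = b then σ * a ^ (σ - 1) else (a ^ σ - b ^ σ) / (a - b)) := by
  set c := (if a = b then σ * a ^ (σ - 1) else (a ^ σ - b ^ σ) / (a - b)) with hc
  have hc0 : 0 ≤ c := uy_dq_nonneg ha hb hσ0
  have hcle : c ≤ a ^ (σ - 1) := uy_dq_le ha hb hσ0 hσ1
  have h1 : a ^ (-(σ/2)) * a ^ (-(σ/2)) = a ^ (-σ) := by
    rw [← Real.rpow_add ha]; ring_nf
  rw [h1]
  have h2 : a ^ (-σ) * a ^ (σ - 1) = a⁻¹ := by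
    rw [← Real.rpow_add ha, ← Real.rpow_neg_one a]; ring_nf
  calc a ^ (-σ) * (c * c) ≤ a ^ (-σ) * (a ^ (σ - 1) * c) := by
        have h3 := Real.rpow_pos_of_pos ha (-σ)
        have h4 : c * c ≤ a ^ (σ - 1) * c := mul_le_mul_of_nonneg_right hcle hc0
        exact mul_le_mul_of_nonneg_left h4 h3.le
    _ = a⁻¹ * c := by rw [← mul_assoc, h2]


/-- Matrix form of Uhlenbeck–Yau's Lemma 4.1.  Let `h = ∑ᵢ λᵢ Pᵢ` be the spectral
decomposition of a positive self-adjoint operator on a finite-dimensional complex inner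
product space (realized as matrices, with `λᵢ > 0` and `Pᵢ` pairwise orthogonal Hermitian
projections summing to `1`).  Let `T = D(h)` be arbitrary, and let `S = D(h^σ)` be given by
the difference-quotient formula `S = ∑_{i,j} ((λᵢ^σ - λⱼ^σ)/(λᵢ - λⱼ)) Pᵢ T Pⱼ`
(interpreted as `σ λᵢ^{σ-1}` when `λᵢ = λⱼ`).  Then for `0 < σ ≤ 1`,
`‖h^{-σ/2} S‖² ≤ Re ⟨h⁻¹ T, S⟩` in the Hilbert–Schmidt inner product
`⟨A, B⟩ = Tr (A B^*)`. -/
theorem stmt8 {n m : ℕ} (σ : ℝ) (hσ0 : 0 < σ) (hσ1 : σ ≤ 1)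
    (lam : Fin m → ℝ) (hlam : ∀ i, 0 < lam i)
    (P : Fin m → Matrix (Fin n) (Fin n) ℂ)
    (hPherm : ∀ i, (P i)ᴴ = P i)
    (hPorth : ∀ i j, P i * P j = if i = j then P i else 0)
    (hPsum : ∑ i, P i = 1)
    (T S : Matrix (Fin n) (Fin n) ℂ)
    (hS : S = ∑ i, ∑ j,
      (((if lam i = lam j then σ * lam i ^ (σ - 1)
        else (lam i ^ σ - lam j ^ σ) / (lam i - lam j) : ℝ)) : ℂ) • (P i * T * P j)) :
    (((∑ i, ((lam i ^ (-(σ / 2)) : ℝ) : ℂ) • P i) * S *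
        ((∑ i, ((lam i ^ (-(σ / 2)) : ℝ) : ℂ) • P i) * S)ᴴ).trace).re ≤
      (((∑ i, (((lam i)⁻¹ : ℝ) : ℂ) • P i) * T * Sᴴ).trace).re := by
  classical
  set c : Fin m → Fin m → ℝ := fun i j =>
    if lam i = lam j then σ * lam i ^ (σ - 1)
    else (lam i ^ σ - lam j ^ σ) / (lam i - lam j) with hc
  set Q : Fin m → Fin m → Matrix (Fin n) (Fin n) ℂ := fun i j => P i * T * P j with hQ
  -- collapsing products with projections
  have hAP : ∀ (f : Fin m → ℝ) (i : Fin m),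
      (∑ k, ((f k : ℝ) : ℂ) • P k) * P i = ((f i : ℝ) : ℂ) • P i := by
    intro f i
    rw [Finset.sum_mul]
    simp only [smul_mul_assoc, hPorth]
    simp [smul_ite, Finset.sum_ite_eq']
  -- trace of Q i j * (Q k l)ᴴ
  have htr : ∀ i j k l, (Q i j * (Q k l)ᴴ).trace
      = if i = k ∧ j = l then (P i * T * P j * Tᴴ).trace else 0 := by
    intro i j k l
    have h1 : (Q k l)ᴴ = P l * (Tᴴ * P k) := by
      simp only [hQ, conjTranspose_mul, hPherm, mul_assoc]
    rw [h1]
    have h2 : Q i j * (P l * (Tᴴ * P k)) = P i * T * (P j * P l) * (Tᴴ * P k) := by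
      simp only [hQ, mul_assoc]
    rw [h2, hPorth]
    by_cases hjl : j = l
    · simp only [if_pos hjl]
      rw [show P i * T * P j * (Tᴴ * P k) = (P i * T * P j * Tᴴ) * P k by
        simp only [mul_assoc]]
      rw [trace_mul_comm, show P k * (P i * T * P j * Tᴴ) = (P k * P i) * (T * P j * Tᴴ) by
        simp only [mul_assoc], hPorth]
      by_cases hik : i = k
      · subst hik
        rw [if_pos rfl, if_pos ⟨rfl, hjl⟩]
        congr 1
        simp only [mul_assoc]
      · rw [if_neg (fun h => hik h.symm), if_neg (fun h => hik h.1)]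
        simp
    · rw [if_neg hjl, if_neg (fun h => hjl h.2)]
      simp
  -- nonnegativity of t
  have htnn : ∀ i j, 0 ≤ ((P i * T * P j * Tᴴ).trace).re := by
    intro i j
    have h0 := htr i j i j
    rw [if_pos ⟨rfl, rfl⟩] at h0
    rw [← h0]
    have h : (Q i j * (Q i j)ᴴ).trace
        = ∑ a, ∑ b, (Complex.normSq (Q i j a b) : ℂ) := by
      simp [Matrix.trace, Matrix.diag, Matrix.mul_apply, Matrix.conjTranspose_apply,
        Complex.mul_conj]
    rw [h]
    simp only [Complex.re_sum]
    apply Finset.sum_nonneg; intro a _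
    apply Finset.sum_nonneg; intro b _
    simp [Complex.normSq_nonneg]
  -- big trace expansion
  have hbig : ∀ (x y : Fin m → Fin m → ℝ),
      ((∑ i, ∑ j, ((x i j : ℝ) : ℂ) • Q i j) *
        (∑ i, ∑ j, ((y i j : ℝ) : ℂ) • Q i j)ᴴ).trace
      = ∑ i, ∑ j, ((x i j * y i j : ℝ) : ℂ) * (P i * T * P j * Tᴴ).trace := by
    intro x y
    simp only [conjTranspose_sum, conjTranspose_smul, Finset.mul_sum, Finset.sum_mul,
      smul_mul_assoc, mul_smul_comm, trace_sum, trace_smul, smul_smul, htr,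
      Complex.star_def, Complex.conj_ofReal, smul_eq_mul, mul_ite, mul_zero]
    refine Finset.sum_congr rfl fun i _ => Finset.sum_congr rfl fun j _ => ?_
    rw [Finset.sum_eq_single i]
    · rw [Finset.sum_eq_single j]
      · simp only [and_self, if_true]
        push_cast; ring
      · intro b _ hb; simp [hb, Ne.symm hb]
      · simp
    · intro b _ hb; simp [hb, Ne.symm hb]
    · simp
  -- rewriting the LHS matrix
  have hLS : (∑ i, ((lam i ^ (-(σ / 2)) : ℝ) : ℂ) • P i) * S
      = ∑ i, ∑ j, ((lam i ^ (-(σ / 2)) * c i j : ℝ) : ℂ) • Q i j := by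
    rw [hS, Finset.mul_sum]
    refine Finset.sum_congr rfl fun i _ => ?_
    rw [Finset.mul_sum]
    refine Finset.sum_congr rfl fun j _ => ?_
    rw [mul_smul_comm,
      show (P i * T * P j : Matrix (Fin n) (Fin n) ℂ) = P i * (T * P j) from mul_assoc _ _ _,
      ← mul_assoc, hAP (fun k => lam k ^ (-(σ / 2))) i, smul_mul_assoc, smul_smul,
      ← Complex.ofReal_mul, ← mul_assoc]
    congr 1
    simp only [hc]
    push_cast
    ring
  -- rewriting the RHS matrix
  have hRT : (∑ i, (((lam i)⁻¹ : ℝ) : ℂ) • P i) * T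
      = ∑ i, ∑ j, ((((fun i _ => (lam i)⁻¹ : Fin m → Fin m → ℝ) i j : ℝ)) : ℂ) • Q i j := by
    rw [Finset.sum_mul]
    refine Finset.sum_congr rfl fun i _ => ?_
    rw [smul_mul_assoc, show P i * T = P i * T * 1 from (mul_one _).symm, ← hPsum,
      Finset.mul_sum, Finset.smul_sum]
  -- put together
  have hSQ : S = ∑ i, ∑ j, ((c i j : ℝ) : ℂ) • Q i j := hS
  rw [hLS, hSQ, hRT, hbig, hbig]
  simp only [Complex.re_sum, Complex.re_ofReal_mul]
  refine Finset.sum_le_sum fun i _ => Finset.sum_le_sum fun j _ => ?_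
  refine mul_le_mul_of_nonneg_right ?_ (htnn i j)
  have := uy_scalar (hlam i) (hlam j) hσ0 hσ1
  calc lam i ^ (-(σ / 2)) * c i j * (lam i ^ (-(σ / 2)) * c i j)
      = (lam i ^ (-(σ / 2)) * lam i ^ (-(σ / 2))) * (c i j * c i j) := by ring
    _ ≤ (lam i)⁻¹ * c i j := this
end

section
/- Let $A$ be a $q \times q$ matrix of real analytic functions on a polydisc in $\mathbb{C}^n$, and suppose $f_1, \ldots, f_q$ are sections with $\bar\partial_{p+1} f_i = \sum_j A_{ij} f_j$ where each $f_i$ is holomorphic in $z_1, \ldots, z_p$ (i.e., independent of $\bar z_1, \ldots, \bar z_p$). Then the matrix $A'$ obtained from $A$ by setting $\bar z_1 = \cdots = \bar z_p = 0$ in its power series expansion is real analytic, holomorphic in $z_1, \ldots, z_p$, and still satisfies $\bar\partial_{p+1} f_i = \sum_j A'_{ij} f_j$ on a possibly smaller polydisc. -/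
open Complex

/-- The Wirtinger derivative `∂f/∂z̄ⱼ` of a function on `ℂⁿ`. -/
noncomputable def dbarj {n : ℕ} (j : Fin n) (f : (Fin n → ℂ) → ℂ)
    (x : Fin n → ℂ) : ℂ :=
  (fderiv ℝ f x (Pi.single j 1) +
    Complex.I * fderiv ℝ f x (Complex.I • (Pi.single j 1 : Fin n → ℂ))) / 2

/-- The open polydisc of polyradius `η` in `ℂⁿ`. -/
def polydisc (n : ℕ) (η : ℝ) : Set (Fin n → ℂ) := {z | ∀ j, ‖z j‖ < η}

/-!
Treat `z̄` as an independent variable. A real analytic germ `h` at `0 ∈ ℂⁿ` is `h z = H (z, z̄)`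
for a holomorphic germ `H` at `0 ∈ ℂⁿ × ℂⁿ`: extend every term of the power series of `h`
complex-multilinearly. The diagonal `{(z, z̄)}` is totally real, so a holomorphic germ vanishing
on it vanishes (restrict it to the complex lines through points of the diagonal), and under
`h ↔ H` the operator `∂̄ⱼ` becomes `∂/∂wⱼ`.

Let `Fᵢ` and `H_A` complexify `fᵢ` and `A`. Holomorphy of `fᵢ` in `z₁, …, z_p` gives
`∂Fᵢ/∂wⱼ = 0` for `j ≤ p`, so `Fᵢ (z, w)` does not depend on `w₁, …, w_p`, and the relation
`∂Fᵢ/∂w_{p+1} = ∑ⱼ (H_A)ᵢⱼ Fⱼ` holds on the diagonal, hence identically. Evaluating it at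
`(z, π z̄)`, where `π` sets `w₁, …, w_p` to zero, gives the relation for `A' z = H_A (z, π z̄)`.
-/

open Filter Metric Set Topology
open scoped ComplexConjugate NNReal ENNReal

noncomputable section

section ConjDiag

variable (ι : Type*)

def conjDiag : (ι → ℂ) →L[ℝ] (ι → ℂ) × (ι → ℂ) :=
  (ContinuousLinearMap.id ℝ _).prod (starL' ℝ : (ι → ℂ) ≃L[ℝ] (ι → ℂ))

def reDiag : (ι → ℂ) × (ι → ℂ) →L[ℝ] (ι → ℂ) :=
  (2⁻¹ : ℝ) • (ContinuousLinearMap.fst ℝ _ _ +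
    (starL' ℝ : (ι → ℂ) ≃L[ℝ] (ι → ℂ)).toContinuousLinearMap.comp (ContinuousLinearMap.snd ℝ _ _))

def imDiag : (ι → ℂ) × (ι → ℂ) →L[ℝ] (ι → ℂ) :=
  (-(I / 2)) • (ContinuousLinearMap.fst ℝ _ _ -
    (starL' ℝ : (ι → ℂ) ≃L[ℝ] (ι → ℂ)).toContinuousLinearMap.comp (ContinuousLinearMap.snd ℝ _ _))

variable {ι}

lemma conjDiag_apply (z : ι → ℂ) : conjDiag ι z = (z, star z) := rfl

lemma reDiag_apply (v : (ι → ℂ) × (ι → ℂ)) : reDiag ι v = (2⁻¹ : ℂ) • (v.1 + star v.2) := by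
  ext j; simp [reDiag]; ring

lemma imDiag_apply (v : (ι → ℂ) × (ι → ℂ)) : imDiag ι v = (-(I / 2)) • (v.1 - star v.2) := by
  ext j; simp [imDiag]

@[simp] lemma reDiag_conjDiag (z : ι → ℂ) : reDiag ι (conjDiag ι z) = z := by
  ext j; simp [reDiag_apply, conjDiag_apply]; ring

@[simp] lemma imDiag_conjDiag (z : ι → ℂ) : imDiag ι (conjDiag ι z) = 0 := by
  simp [imDiag_apply, conjDiag_apply]

lemma reDiag_I_smul (v : (ι → ℂ) × (ι → ℂ)) : reDiag ι (I • v) = -imDiag ι v := by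
  ext j; simp [reDiag_apply, imDiag_apply]; ring

lemma imDiag_I_smul (v : (ι → ℂ) × (ι → ℂ)) : imDiag ι (I • v) = reDiag ι v := by
  ext j; simp [reDiag_apply, imDiag_apply]; ring_nf; simp [I_sq]; ring

lemma conjDiag_reDiag_add_I_smul (v : (ι → ℂ) × (ι → ℂ)) :
    conjDiag ι (reDiag ι v) + I • conjDiag ι (imDiag ι v) = v := by
  ext j <;> simp [reDiag_apply, imDiag_apply, conjDiag_apply] <;> ring_nf <;> simp [I_sq] <;> ring

@[simp] lemma norm_conjDiag [Fintype ι] (z : ι → ℂ) : ‖conjDiag ι z‖ = ‖z‖ := by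
  simp [conjDiag_apply, Prod.norm_def]

lemma norm_reDiag_le [Fintype ι] (v : (ι → ℂ) × (ι → ℂ)) : ‖reDiag ι v‖ ≤ ‖v‖ := by
  rw [reDiag_apply, norm_smul]
  calc ‖(2⁻¹ : ℂ)‖ * ‖v.1 + star v.2‖ ≤ 2⁻¹ * (‖v‖ + ‖v‖) := by
        gcongr
        · simp
        · exact (norm_add_le _ _).trans
            (add_le_add (norm_fst_le v) ((norm_star _).trans_le (norm_snd_le v)))
    _ = ‖v‖ := by ring

lemma norm_imDiag_le [Fintype ι] (v : (ι → ℂ) × (ι → ℂ)) : ‖imDiag ι v‖ ≤ ‖v‖ := by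
  rw [imDiag_apply, norm_smul]
  calc ‖-(I / 2)‖ * ‖v.1 - star v.2‖ ≤ 2⁻¹ * (‖v‖ + ‖v‖) := by
        gcongr
        · simp
        · exact (norm_sub_le _ _).trans
            (add_le_add (norm_fst_le v) ((norm_star _).trans_le (norm_snd_le v)))
    _ = ‖v‖ := by ring

end ConjDiag

lemma smul_eq_re_smul_add_im_smul_I_smul {E : Type*} [AddCommGroup E] [Module ℂ E] [Module ℝ E]
    [IsScalarTower ℝ ℂ E] (c : ℂ) (x : E) : c • x = c.re • x + c.im • (I • x) := by
  rw [RCLike.real_smul_eq_coe_smul (K := ℂ), RCLike.real_smul_eq_coe_smul (K := ℂ), smul_smul,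
    ← add_smul]
  simp

lemma map_complex_smul_of_map_I_smul {E F : Type*} [AddCommGroup E] [Module ℂ E] [Module ℝ E]
    [IsScalarTower ℝ ℂ E] [AddCommGroup F] [Module ℂ F] [Module ℝ F] [IsScalarTower ℝ ℂ F]
    (f : E →ₗ[ℝ] F) (hI : ∀ x, f (I • x) = I • f x) (c : ℂ) (x : E) : f (c • x) = c • f x := by
  rw [smul_eq_re_smul_add_im_smul_I_smul c x, map_add, map_smul, map_smul, hI,
    ← smul_eq_re_smul_add_im_smul_I_smul]

section Complexify

variable {ι : Type*} {F : Type*} [NormedAddCommGroup F] [NormedSpace ℂ F] {k : ℕ}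

def diagPart (ι : Type*) (b : Bool) : (ι → ℂ) × (ι → ℂ) →L[ℝ] (ι → ℂ) :=
  if b then imDiag ι else reDiag ι

def diagCoeff (ε : Fin k → Bool) : ℂ := ∏ l, if ε l then I else 1

lemma diagCoeff_update (ε : Fin k → Bool) (l : Fin k) (b : Bool) :
    diagCoeff (Function.update ε l b) =
      (if b then I else 1) * ∏ i ∈ Finset.univ.erase l, if ε i then I else 1 := by
  rw [diagCoeff, ← Finset.mul_prod_erase _ _ (Finset.mem_univ l), Function.update_self]
  congr 1
  exact Finset.prod_congr rfl fun i hi => by rw [Function.update_of_ne (Finset.ne_of_mem_erase hi)]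

lemma diagCoeff_eq (ε : Fin k → Bool) (l : Fin k) :
    diagCoeff ε = (if ε l then I else 1) * ∏ i ∈ Finset.univ.erase l, if ε i then I else 1 := by
  conv_lhs => rw [← Function.update_eq_self l ε]
  exact diagCoeff_update ε l (ε l)

lemma diagPart_I_smul (b : Bool) (x : (ι → ℂ) × (ι → ℂ)) :
    diagPart ι b (I • x) = (if b then (1 : ℝ) else -1) • diagPart ι (!b) x := by
  cases b <;> simp [diagPart, imDiag_I_smul, reDiag_I_smul]

lemma norm_diagCoeff (ε : Fin k → Bool) : ‖diagCoeff ε‖ = 1 := by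
  simp [diagCoeff, apply_ite]

lemma norm_diagPart_le [Fintype ι] (b : Bool) : ‖diagPart ι b‖ ≤ 1 := by
  refine ContinuousLinearMap.opNorm_le_bound _ zero_le_one fun v => ?_
  cases b
  · simpa [diagPart] using norm_reDiag_le v
  · simpa [diagPart] using norm_imDiag_le v

def flipAt (l : Fin k) : Equiv.Perm (Fin k → Bool) :=
  Function.Involutive.toPerm (fun ε => Function.update ε l (!ε l)) fun ε => by simp

namespace ContinuousMultilinearMap

variable (P : ContinuousMultilinearMap ℝ (fun _ : Fin k => ι → ℂ) F)

/-- The complex multilinear extension `P^ℂ (v₁, …, v_k) = ∑_ε i^{|ε|} P (w₁, …, w_k)`, where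
`w_l` is the real or imaginary part of `v_l` according to `ε l`; it is obtained by expanding
`P` multilinearly along `v = conjDiag (reDiag v) + i • conjDiag (imDiag v)`. -/
def complexifyReal :
    ContinuousMultilinearMap ℝ (fun _ : Fin k => (ι → ℂ) × (ι → ℂ)) F :=
  ∑ ε : Fin k → Bool, diagCoeff ε • P.compContinuousLinearMap fun l => diagPart ι (ε l)

lemma complexifyReal_apply (m : Fin k → (ι → ℂ) × (ι → ℂ)) :
    P.complexifyReal m = ∑ ε : Fin k → Bool, diagCoeff ε • P fun l => diagPart ι (ε l) (m l) := by
  simp [complexifyReal]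

lemma complexifyReal_update_I_smul (m : Fin k → (ι → ℂ) × (ι → ℂ)) (l : Fin k)
    (x : (ι → ℂ) × (ι → ℂ)) :
    P.complexifyReal (Function.update m l (I • x)) =
      I • P.complexifyReal (Function.update m l x) := by
  -- Multiplying the `l`-th argument by `i` swaps its real and imaginary parts up to sign, so
  -- reindexing by `flipAt l` matches the two sums term by term.
  simp only [complexifyReal_apply, Finset.smul_sum]
  refine Fintype.sum_equiv (flipAt l) _ _ fun ε => ?_
  have hupd : ∀ ε' : Fin k → Bool, (∀ i ≠ l, ε' i = ε i) → ∀ y,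
      (fun i => diagPart ι (ε' i) (Function.update m l y i)) =
        Function.update (fun i => diagPart ι (ε i) (m i)) l (diagPart ι (ε' l) y) := by
    intro ε' hε' y
    ext1 i
    rcases eq_or_ne i l with rfl | hi
    · simp
    · simp [Function.update_of_ne hi, hε' i hi]
  have hflip : flipAt l ε = Function.update ε l (!ε l) := rfl
  rw [hupd ε fun _ _ => rfl, hupd _ fun i hi => by rw [hflip, Function.update_of_ne hi], hflip,
    Function.update_self, diagPart_I_smul, P.map_update_smul, diagCoeff_update, diagCoeff_eq ε l,
    RCLike.real_smul_eq_coe_smul (K := ℂ), smul_smul, smul_smul]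
  congr 1
  cases ε l <;> simp [← mul_assoc]

def complexify : ContinuousMultilinearMap ℂ (fun _ : Fin k => (ι → ℂ) × (ι → ℂ)) F where
  toFun := P.complexifyReal
  map_update_add' m l x y := by
    convert P.complexifyReal.map_update_add m l x y
  map_update_smul' := by
    intro inst m l c x
    obtain rfl : inst = instDecidableEqFin k := Subsingleton.elim _ _
    exact map_complex_smul_of_map_I_smul (P.complexifyReal.toMultilinearMap.toLinearMap m l)
      (fun y => P.complexifyReal_update_I_smul m l y) c x
  cont := P.complexifyReal.cont

lemma complexify_apply (m : Fin k → (ι → ℂ) × (ι → ℂ)) : P.complexify m = P.complexifyReal m :=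
  rfl

lemma restrictScalars_complexify : P.complexify.restrictScalars ℝ = P.complexifyReal := rfl

lemma norm_complexify_le [Fintype ι] : ‖P.complexify‖ ≤ 2 ^ k * ‖P‖ := by
  rw [← P.complexify.norm_restrictScalars (𝕜' := ℝ), restrictScalars_complexify, complexifyReal]
  calc ‖∑ ε : Fin k → Bool, diagCoeff ε • P.compContinuousLinearMap fun l => diagPart ι (ε l)‖
      ≤ ∑ _ε : Fin k → Bool, ‖P‖ := by
        refine (norm_sum_le _ _).trans (Finset.sum_le_sum fun ε _ => ?_)
        rw [norm_smul, norm_diagCoeff, one_mul]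
        refine (norm_compContinuousLinearMap_le _ _).trans ?_
        exact mul_le_of_le_one_right (norm_nonneg _)
          (Finset.prod_le_one (fun _ _ => norm_nonneg _) fun l _ => norm_diagPart_le _)
    _ = 2 ^ k * ‖P‖ := by simp

lemma complexify_apply_conjDiag (m : Fin k → ι → ℂ) :
    P.complexify (fun l => conjDiag ι (m l)) = P m := by
  rw [complexify_apply, complexifyReal_apply, Finset.sum_eq_single fun _ => false]
  · simp [diagCoeff, diagPart]
  · intro ε _ hε
    obtain ⟨l, hl⟩ : ∃ l, ε l = true := by
      by_contra! h
      exact hε (funext fun l => by simpa using h l)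
    rw [P.map_coord_zero l (by simp [diagPart, hl]), smul_zero]
  · simp

end ContinuousMultilinearMap

end Complexify

namespace FormalMultilinearSeries

variable {ι : Type*} {F : Type*} [NormedAddCommGroup F] [NormedSpace ℂ F]
  (p : FormalMultilinearSeries ℝ (ι → ℂ) F)

def complexify : FormalMultilinearSeries ℂ ((ι → ℂ) × (ι → ℂ)) F :=
  fun k => (p k).complexify

lemma radius_div_two_le_radius_complexify [Fintype ι] : p.radius / 2 ≤ p.complexify.radius := by
  refine ENNReal.le_of_forall_nnreal_lt fun r hr => ?_
  have h2r : ((2 * r : ℝ≥0) : ℝ≥0∞) < p.radius := by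
    rw [ENNReal.coe_mul, mul_comm]
    exact (ENNReal.lt_div_iff_mul_lt (by simp) (by simp)).1 hr
  obtain ⟨C, -, hC⟩ := p.norm_mul_pow_le_of_lt_radius h2r
  refine p.complexify.le_radius_of_bound C fun k => ?_
  calc ‖(p k).complexify‖ * (r : ℝ) ^ k ≤ 2 ^ k * ‖p k‖ * (r : ℝ) ^ k := by
        gcongr; exact (p k).norm_complexify_le
    _ = ‖p k‖ * ((2 * r : ℝ≥0) : ℝ) ^ k := by push_cast; ring
    _ ≤ C := hC k

lemma complexify_sum_conjDiag (z : ι → ℂ) : p.complexify.sum (conjDiag ι z) = p.sum z :=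
  tsum_congr fun k => (p k).complexify_apply_conjDiag fun _ => z

end FormalMultilinearSeries

theorem AnalyticAt.exists_complexification {ι : Type*} [Fintype ι] {F : Type*}
    [NormedAddCommGroup F] [NormedSpace ℂ F] [CompleteSpace F] {h : (ι → ℂ) → F}
    (hh : AnalyticAt ℝ h 0) :
    ∃ H : (ι → ℂ) × (ι → ℂ) → F, AnalyticAt ℂ H 0 ∧ h =ᶠ[𝓝 0] fun z => H (conjDiag ι z) := by
  obtain ⟨p, r, hp⟩ := hh
  have hrad : 0 < p.complexify.radius :=
    (ENNReal.div_pos hp.radius_pos.ne' ENNReal.ofNat_ne_top).trans_le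
      p.radius_div_two_le_radius_complexify
  refine ⟨p.complexify.sum, (p.complexify.hasFPowerSeriesOnBall hrad).analyticAt, ?_⟩
  filter_upwards [Metric.eball_mem_nhds 0 hp.r_pos] with z hz
  simpa [p.complexify_sum_conjDiag] using hp.sum hz

theorem AnalyticOnNhd.eqOn_zero_of_eventually_ofReal {F : Type*} [NormedAddCommGroup F]
    [NormedSpace ℂ F] {g : ℂ → F} {U : Set ℂ} {x : ℝ} (hg : AnalyticOnNhd ℂ g U)
    (hU : IsPreconnected U) (hx : (x : ℂ) ∈ U) (hreal : ∀ᶠ s : ℝ in 𝓝 x, g s = 0) :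
    EqOn g 0 U := by
  refine hg.eqOn_zero_of_preconnected_of_frequently_eq_zero hU hx ?_
  have hofReal : Tendsto ((↑) : ℝ → ℂ) (𝓝[≠] x) (𝓝[≠] (x : ℂ)) :=
    continuous_ofReal.continuousWithinAt.tendsto_nhdsWithin fun _ _ => by simp_all
  exact hofReal.frequently (hreal.filter_mono nhdsWithin_le_nhds).frequently

theorem AnalyticAt.eventually_eq_zero_of_conjDiag {ι : Type*} [Fintype ι] {F : Type*}
    [NormedAddCommGroup F] [NormedSpace ℂ F] [CompleteSpace F] {Φ : (ι → ℂ) × (ι → ℂ) → F}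
    (hΦ : AnalyticAt ℂ Φ 0) (h : ∀ᶠ z in 𝓝 0, Φ (conjDiag ι z) = 0) :
    ∀ᶠ v in 𝓝 0, Φ v = 0 := by
  obtain ⟨r₁, hr₁, hΦr⟩ := Metric.eventually_nhds_iff_ball.1 hΦ.eventually_analyticAt
  obtain ⟨r₂, hr₂, hr⟩ := Metric.eventually_nhds_iff_ball.1 h
  filter_upwards [ball_mem_nhds 0 (by positivity : 0 < min r₁ r₂ / 3)] with v hv
  rw [mem_ball_zero_iff] at hv
  -- `g` is holomorphic on the disc of radius 2, vanishes on its real diameter, and `g I = Φ v`.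
  set g : ℂ → F := fun t => Φ (conjDiag ι (reDiag ι v) + t • conjDiag ι (imDiag ι v))
  have hsmall : ∀ t : ℂ, ‖t‖ < 2 →
      ‖conjDiag ι (reDiag ι v) + t • conjDiag ι (imDiag ι v)‖ < min r₁ r₂ := fun t ht =>
    calc _ ≤ ‖v‖ + 2 * ‖v‖ := by
          refine (norm_add_le _ _).trans (add_le_add (by simpa using norm_reDiag_le v) ?_)
          rw [norm_smul, norm_conjDiag]
          exact mul_le_mul ht.le (norm_imDiag_le v) (norm_nonneg _) zero_le_two
      _ < min r₁ r₂ := by linarith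
  have hg : AnalyticOnNhd ℂ g (ball 0 2) := fun t ht =>
    (hΦr _ (mem_ball_zero_iff.2 ((hsmall t (mem_ball_zero_iff.1 ht)).trans_le
      (min_le_left _ _)))).comp (f := fun t : ℂ => _ + t • _) (by fun_prop)
  have hreal : ∀ᶠ s : ℝ in 𝓝 0, g s = 0 := by
    filter_upwards [ball_mem_nhds (0 : ℝ) two_pos] with s hs
    have hs' : conjDiag ι (reDiag ι v) + (s : ℂ) • conjDiag ι (imDiag ι v) =
        conjDiag ι (reDiag ι v + s • imDiag ι v) := by
      rw [map_add, map_smul, Complex.coe_smul]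
    have hlt := hsmall s (by simpa using mem_ball_zero_iff.1 hs)
    rw [hs', norm_conjDiag] at hlt
    simpa only [g, hs'] using hr _ (mem_ball_zero_iff.2 (hlt.trans_le (min_le_right _ _)))
  have hgI := hg.eqOn_zero_of_eventually_ofReal (x := 0) (convex_ball _ _).isPreconnected
    (by simp) (by simpa using hreal) (mem_ball_zero_iff.2 (by simp : ‖I‖ < 2))
  simpa [g, conjDiag_reDiag_add_I_smul] using hgI

theorem eq_of_fderiv_apply_eq_zero {E F : Type*} [NormedAddCommGroup E] [NormedSpace ℝ E]
    [NormedAddCommGroup F] [NormedSpace ℝ F] {G : E → F} {x d : E}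
    (hG : ∀ t ∈ Icc (0 : ℝ) 1, DifferentiableAt ℝ G (x + t • d))
    (hd : ∀ t ∈ Icc (0 : ℝ) 1, fderiv ℝ G (x + t • d) d = 0) : G (x + d) = G x := by
  have hderiv : ∀ t ∈ Icc (0 : ℝ) 1, HasDerivAt (fun t : ℝ => G (x + t • d)) 0 t := fun t ht => by
    simpa [hd t ht, Function.comp_def] using
      (hG t ht).hasFDerivAt.comp_hasDerivAt t (((hasDerivAt_id t).smul_const d).const_add x)
  simpa using constant_of_has_deriv_right_zero
    (fun t ht => (hderiv t ht).continuousAt.continuousWithinAt)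
    (fun t ht => (hderiv t (Ico_subset_Icc_self ht)).hasDerivWithinAt) 1 (by simp)

lemma ContinuousLinearMap.apply_conjDiag_add_I_mul {ι : Type*}
    (D : (ι → ℂ) × (ι → ℂ) →L[ℂ] ℂ) (x : ι → ℂ) :
    D (conjDiag ι x) + I * D (conjDiag ι (I • x)) = 2 * D (0, star x) := by
  have h1 : conjDiag ι x = (x, 0) + (0, star x) := by simp [conjDiag_apply]
  have h2 : conjDiag ι (I • x) = I • (x, 0) - I • (0, star x) := by simp [conjDiag_apply]
  rw [h1, h2, map_add, map_sub, map_smul, map_smul, smul_eq_mul, smul_eq_mul]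
  ring_nf
  rw [I_sq]
  ring

section Wirtinger

variable {n : ℕ}

lemma Filter.EventuallyEq.dbarj_eq {f g : (Fin n → ℂ) → ℂ} {z : Fin n → ℂ} (h : f =ᶠ[𝓝 z] g)
    (k : Fin n) : dbarj k f z = dbarj k g z := by
  simp only [dbarj, h.fderiv_eq]

theorem dbarj_comp_conjDiag {H : (Fin n → ℂ) × (Fin n → ℂ) → ℂ} {z : Fin n → ℂ}
    (hH : DifferentiableAt ℂ H (conjDiag _ z)) (k : Fin n) :
    dbarj k (fun w => H (conjDiag _ w)) z = fderiv ℂ H (conjDiag _ z) (0, Pi.single k 1) := by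
  have hd : fderiv ℝ (fun w => H (conjDiag _ w)) z =
      (fderiv ℂ H (conjDiag _ z)).restrictScalars ℝ ∘L conjDiag _ :=
    ((hH.hasFDerivAt.restrictScalars ℝ).comp z (conjDiag _).hasFDerivAt).fderiv
  rw [dbarj, hd]
  simp only [ContinuousLinearMap.comp_apply, ContinuousLinearMap.coe_restrictScalars']
  rw [ContinuousLinearMap.apply_conjDiag_add_I_mul]
  simp

end Wirtinger

section ZeroBelow

variable {n p : ℕ}

-- Coordinates are indexed from `0`: `zeroBelow n p` sets the paper's `w₁, …, w_p` to zero.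
variable (n p) in
def zeroBelow : (Fin n → ℂ) →L[ℂ] (Fin n → ℂ) :=
  ContinuousLinearMap.pi fun j => if (j : ℕ) < p then 0 else ContinuousLinearMap.proj j

variable (n p) in
def zeroBelowSnd : (Fin n → ℂ) × (Fin n → ℂ) →L[ℂ] (Fin n → ℂ) × (Fin n → ℂ) :=
  (ContinuousLinearMap.id ℂ _).prodMap (zeroBelow n p)

lemma zeroBelow_apply (w : Fin n → ℂ) (j : Fin n) :
    zeroBelow n p w j = if (j : ℕ) < p then 0 else w j := by
  simp only [zeroBelow, ContinuousLinearMap.pi_apply]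
  split_ifs <;> simp

lemma zeroBelowSnd_apply (ζ : (Fin n → ℂ) × (Fin n → ℂ)) :
    zeroBelowSnd n p ζ = (ζ.1, zeroBelow n p ζ.2) := rfl

lemma zeroBelow_single_of_lt {k : Fin n} (hk : (k : ℕ) < p) :
    zeroBelow n p (Pi.single k 1) = 0 := by
  ext j; rw [zeroBelow_apply]; split_ifs with hj
  · rfl
  · rw [Pi.single_eq_of_ne (by rintro rfl; exact hj hk)]; rfl

lemma zeroBelow_single_of_le {k : Fin n} (hk : p ≤ (k : ℕ)) :
    zeroBelow n p (Pi.single k 1) = Pi.single k 1 := by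
  ext j; rw [zeroBelow_apply]; split_ifs with hj
  · rw [Pi.single_eq_of_ne (by rintro rfl; omega)]
  · rfl

lemma norm_zeroBelowSnd_le (ζ : (Fin n → ℂ) × (Fin n → ℂ)) : ‖zeroBelowSnd n p ζ‖ ≤ ‖ζ‖ := by
  rw [zeroBelowSnd_apply, Prod.norm_def, Prod.norm_def]
  refine max_le_max le_rfl ((pi_norm_le_iff_of_nonneg (norm_nonneg _)).2 fun j => ?_)
  change ‖zeroBelow n p ζ.2 j‖ ≤ _
  rw [zeroBelow_apply]
  split_ifs
  · simp
  · exact norm_le_pi_norm ζ.2 j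

lemma ContinuousLinearMap.apply_zeroBelowSnd_sub_eq_zero {F : Type*} [AddCommGroup F] [Module ℂ F]
    [TopologicalSpace F] (D : (Fin n → ℂ) × (Fin n → ℂ) →L[ℂ] F)
    (hD : ∀ k : Fin n, (k : ℕ) < p → D (0, Pi.single k 1) = 0) (ζ : (Fin n → ℂ) × (Fin n → ℂ)) :
    D (zeroBelowSnd n p ζ - ζ) = 0 := by
  have hsum : zeroBelowSnd n p ζ - ζ =
      ∑ k : Fin n, (zeroBelow n p ζ.2 - ζ.2) k • ((0 : Fin n → ℂ), Pi.single k (1 : ℂ)) := by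
    ext j
    · simp [zeroBelowSnd_apply, Prod.fst_sum]
    · simp [zeroBelowSnd_apply, Prod.snd_sum, Finset.sum_apply, Pi.single_apply]
  rw [hsum, map_sum]
  refine Finset.sum_eq_zero fun k _ => ?_
  by_cases hk : (k : ℕ) < p
  · rw [map_smul, hD k hk, smul_zero]
  · simp [zeroBelow_apply, hk]

end ZeroBelow

section Germs

variable {n p : ℕ} {F : Type*} [NormedAddCommGroup F] [NormedSpace ℂ F]

theorem comp_zeroBelowSnd_eventuallyEq {H : (Fin n → ℂ) × (Fin n → ℂ) → F}
    (hH : ∀ᶠ ζ in 𝓝 0, DifferentiableAt ℂ H ζ)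
    (hw : ∀ᶠ ζ in 𝓝 0, ∀ k : Fin n, (k : ℕ) < p → fderiv ℂ H ζ (0, Pi.single k 1) = 0) :
    (fun ζ => H (zeroBelowSnd n p ζ)) =ᶠ[𝓝 0] H := by
  obtain ⟨r, hr, hball⟩ := Metric.eventually_nhds_iff_ball.1 (hH.and hw)
  filter_upwards [ball_mem_nhds 0 hr] with ζ hζ
  have hM : zeroBelowSnd n p ζ ∈ ball 0 r :=
    mem_ball_zero_iff.2 ((norm_zeroBelowSnd_le ζ).trans_lt (mem_ball_zero_iff.1 hζ))
  have hseg := fun t (ht : t ∈ Icc (0 : ℝ) 1) =>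
    hball _ ((convex_ball 0 r).add_smul_sub_mem hζ hM ht)
  have hconst := eq_of_fderiv_apply_eq_zero (fun t ht => (hseg t ht).1.restrictScalars ℝ)
    fun t ht => by
      rw [(hseg t ht).1.fderiv_restrictScalars ℝ, ContinuousLinearMap.coe_restrictScalars']
      exact ContinuousLinearMap.apply_zeroBelowSnd_sub_eq_zero _ (hseg t ht).2 ζ
  simpa using hconst

lemma AnalyticAt.fderiv_apply [CompleteSpace F] {E : Type*} [NormedAddCommGroup E]
    [NormedSpace ℂ E] {H : E → F} {x : E} (hH : AnalyticAt ℂ H x) (v : E) :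
    AnalyticAt ℂ (fun y => fderiv ℂ H y v) x :=
  ((ContinuousLinearMap.apply ℂ F v).analyticAt _).comp hH.fderiv

lemma tendsto_conjDiag_nhds_zero : Tendsto (conjDiag (Fin n)) (𝓝 0) (𝓝 0) :=
  (conjDiag _).continuous.tendsto' 0 0 (map_zero _)

theorem eventually_dbarj_eq_fderiv {h : (Fin n → ℂ) → ℂ} {H : (Fin n → ℂ) × (Fin n → ℂ) → ℂ}
    (hH : AnalyticAt ℂ H 0) (hhH : h =ᶠ[𝓝 0] fun z => H (conjDiag _ z)) (k : Fin n) :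
    ∀ᶠ z in 𝓝 0, dbarj k h z = fderiv ℂ H (conjDiag _ z) (0, Pi.single k 1) := by
  filter_upwards [hhH.eventuallyEq_nhds,
    tendsto_conjDiag_nhds_zero.eventually hH.eventually_analyticAt] with z hz hHz
  exact (hz.dbarj_eq k).trans (dbarj_comp_conjDiag hHz.differentiableAt k)

theorem comp_zeroBelowSnd_eventuallyEq_of_dbarj {h : (Fin n → ℂ) → ℂ}
    {H : (Fin n → ℂ) × (Fin n → ℂ) → ℂ} (hH : AnalyticAt ℂ H 0)
    (hhH : h =ᶠ[𝓝 0] fun z => H (conjDiag _ z))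
    (hhol : ∀ k : Fin n, (k : ℕ) < p → ∀ᶠ z in 𝓝 0, dbarj k h z = 0) :
    (fun ζ => H (zeroBelowSnd n p ζ)) =ᶠ[𝓝 0] H := by
  refine comp_zeroBelowSnd_eventuallyEq (hH.eventually_analyticAt.mono fun _ hζ =>
    hζ.differentiableAt) (eventually_all.2 fun k => ?_)
  by_cases hk : (k : ℕ) < p
  · refine ((hH.fderiv_apply _).eventually_eq_zero_of_conjDiag ?_).mono fun _ hζ _ => hζ
    filter_upwards [eventually_dbarj_eq_fderiv hH hhH k, hhol k hk] with z hz hz'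
    rw [← hz, hz']
  · exact .of_forall fun _ hk' => absurd hk' hk

theorem eventually_fderiv_zeroBelowSnd_eq {H : (Fin n → ℂ) × (Fin n → ℂ) → F}
    (hH : ∀ᶠ ζ in 𝓝 0, DifferentiableAt ℂ H ζ) (hHw : (fun ζ => H (zeroBelowSnd n p ζ)) =ᶠ[𝓝 0] H)
    {k : Fin n} (hk : p ≤ (k : ℕ)) :
    ∀ᶠ ζ in 𝓝 0, fderiv ℂ H (zeroBelowSnd n p ζ) (0, Pi.single k 1) =
      fderiv ℂ H ζ (0, Pi.single k 1) := by
  have hM : Tendsto (zeroBelowSnd n p) (𝓝 0) (𝓝 0) :=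
    (zeroBelowSnd n p).continuous.tendsto' 0 0 (map_zero _)
  filter_upwards [hHw.eventuallyEq_nhds, hM.eventually hH] with ζ hζ hHζ
  rw [← hζ.fderiv_eq, fderiv_fun_comp ζ hHζ (zeroBelowSnd n p).differentiableAt,
    ContinuousLinearMap.fderiv, ContinuousLinearMap.comp_apply,
    zeroBelowSnd_apply ((0 : Fin n → ℂ), _), zeroBelow_single_of_le hk]

lemma tendsto_zeroBelowSnd_conjDiag_nhds_zero :
    Tendsto (fun z => zeroBelowSnd n p (conjDiag (Fin n) z)) (𝓝 0) (𝓝 0) :=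
  ((zeroBelowSnd n p).continuous.tendsto' 0 0 (map_zero _)).comp tendsto_conjDiag_nhds_zero

theorem eventually_dbarj_eq_sum_comp_zeroBelowSnd {κ : Type*} [Fintype κ] {k : Fin n}
    (hk : p ≤ (k : ℕ)) {g : κ → (Fin n → ℂ) → ℂ} {A : κ → κ → (Fin n → ℂ) → ℂ}
    {G : κ → (Fin n → ℂ) × (Fin n → ℂ) → ℂ} {HA : κ → κ → (Fin n → ℂ) × (Fin n → ℂ) → ℂ}
    (hG : ∀ i, AnalyticAt ℂ (G i) 0) (hHA : ∀ i j, AnalyticAt ℂ (HA i j) 0)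
    (hgG : ∀ i, g i =ᶠ[𝓝 0] fun z => G i (conjDiag _ z))
    (hAHA : ∀ i j, A i j =ᶠ[𝓝 0] fun z => HA i j (conjDiag _ z))
    (hGw : ∀ i, (fun ζ => G i (zeroBelowSnd n p ζ)) =ᶠ[𝓝 0] G i)
    (hrel : ∀ i, ∀ᶠ z in 𝓝 0, dbarj k (g i) z = ∑ j, A i j z * g j z) (i : κ) :
    ∀ᶠ z in 𝓝 0, dbarj k (g i) z = ∑ j, HA i j (zeroBelowSnd n p (conjDiag _ z)) * g j z := by
  have hΦ : ∀ᶠ ζ in 𝓝 0, fderiv ℂ (G i) ζ (0, Pi.single k 1) - ∑ j, HA i j ζ * G j ζ = 0 := by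
    refine AnalyticAt.eventually_eq_zero_of_conjDiag (((hG i).fderiv_apply _).sub
      (Finset.analyticAt_fun_sum _ fun j _ => (hHA i j).mul (hG j))) ?_
    filter_upwards [eventually_dbarj_eq_fderiv (hG i) (hgG i) k, hrel i,
      eventually_all.2 (hAHA i), eventually_all.2 hgG] with z hdbar hrelz hAz hgz
    rw [← hdbar, hrelz, sub_eq_zero]
    simp only [hAz, hgz]
  filter_upwards [eventually_dbarj_eq_fderiv (hG i) (hgG i) k,
    tendsto_conjDiag_nhds_zero.eventually (eventually_fderiv_zeroBelowSnd_eq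
      ((hG i).eventually_analyticAt.mono fun _ hζ => hζ.differentiableAt) (hGw i) hk),
    tendsto_zeroBelowSnd_conjDiag_nhds_zero.eventually hΦ,
    eventually_all.2 fun j => tendsto_conjDiag_nhds_zero.eventually (hGw j),
    eventually_all.2 hgG] with z hdbar hfderiv hΦz hGwz hgz
  rw [hdbar, ← hfderiv, sub_eq_zero.1 hΦz]
  simp only [hGwz, hgz]

theorem dbarj_comp_zeroBelowSnd_conjDiag {H : (Fin n → ℂ) × (Fin n → ℂ) → ℂ} {z : Fin n → ℂ}
    (hH : DifferentiableAt ℂ H (zeroBelowSnd n p (conjDiag _ z))) {k : Fin n} (hk : (k : ℕ) < p) :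
    dbarj k (fun w => H (zeroBelowSnd n p (conjDiag _ w))) z = 0 := by
  rw [dbarj_comp_conjDiag (H := fun ζ => H (zeroBelowSnd n p ζ))
      (hH.comp _ (zeroBelowSnd n p).differentiableAt),
    fderiv_fun_comp _ hH (zeroBelowSnd n p).differentiableAt, ContinuousLinearMap.fderiv,
    ContinuousLinearMap.comp_apply, zeroBelowSnd_apply ((0 : Fin n → ℂ), _),
    zeroBelow_single_of_lt hk, Prod.mk_zero_zero, map_zero]

end Germs

lemma polydisc_eq_ball {n : ℕ} {η : ℝ} (hη : 0 < η) : polydisc n η = ball 0 η := by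
  ext z
  simp [polydisc, pi_norm_lt_iff hη]

end

/-- Let `A` be a `q × q` matrix of real analytic functions on a polydisc in `ℂⁿ`, and let
`f₁, …, f_q` be real analytic `ℂʳ`-valued functions, holomorphic in `z₁, …, z_p`,
satisfying `∂̄_{p+1} fᵢ = ∑ⱼ Aᵢⱼ fⱼ`.  Then on a possibly smaller polydisc there is a
matrix `A'` of real analytic functions (obtained by setting `z̄₁ = ⋯ = z̄_p = 0` in the
power series of `A`) which is holomorphic in `z₁, …, z_p` and still satisfies
`∂̄_{p+1} fᵢ = ∑ⱼ A'ᵢⱼ fⱼ`. -/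
theorem stmt15 {n q r p : ℕ} (hp : p < n) (η : ℝ) (hη : 0 < η)
    (A : (Fin n → ℂ) → Matrix (Fin q) (Fin q) ℂ)
    (hA : ∀ i j, AnalyticOnNhd ℝ (fun z => A z i j) (polydisc n η))
    (f : Fin q → (Fin n → ℂ) → Fin r → ℂ)
    (hf : ∀ i c, AnalyticOnNhd ℝ (fun z => f i z c) (polydisc n η))
    (hhol : ∀ i c, ∀ z ∈ polydisc n η, ∀ j : Fin n, (j : ℕ) < p →
      dbarj j (fun w => f i w c) z = 0)
    (hrel : ∀ i c, ∀ z ∈ polydisc n η,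
      dbarj (⟨p, hp⟩ : Fin n) (fun w => f i w c) z = ∑ j, A z i j * f j z c) :
    ∃ η' : ℝ, 0 < η' ∧ η' ≤ η ∧
      ∃ A' : (Fin n → ℂ) → Matrix (Fin q) (Fin q) ℂ,
        (∀ i j, AnalyticOnNhd ℝ (fun z => A' z i j) (polydisc n η')) ∧
        (∀ i j, ∀ z ∈ polydisc n η', ∀ k : Fin n, (k : ℕ) < p →
          dbarj k (fun w => A' w i j) z = 0) ∧
        (∀ i c, ∀ z ∈ polydisc n η',
          dbarj (⟨p, hp⟩ : Fin n) (fun w => f i w c) z = ∑ j, A' z i j * f j z c) := by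
  have hU : polydisc n η ∈ 𝓝 0 := polydisc_eq_ball hη ▸ ball_mem_nhds 0 hη
  choose HA hHA hAHA using fun i j => (hA i j 0 (mem_of_mem_nhds hU)).exists_complexification
  choose F hF hfF using fun i c => (hf i c 0 (mem_of_mem_nhds hU)).exists_complexification
  have hFw : ∀ i c, (fun ζ => F i c (zeroBelowSnd n p ζ)) =ᶠ[𝓝 0] F i c := fun i c =>
    comp_zeroBelowSnd_eventuallyEq_of_dbarj (hF i c) (hfF i c) fun k hk =>
      eventually_of_mem hU fun z hz => hhol i c z hz k hk
  have hrel' : ∀ c i, ∀ᶠ z in 𝓝 0, dbarj ⟨p, hp⟩ (fun w => f i w c) z =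
      ∑ j, HA i j (zeroBelowSnd n p (conjDiag _ z)) * f j z c := fun c =>
    eventually_dbarj_eq_sum_comp_zeroBelowSnd le_rfl (fun i => hF i c) hHA (fun i => hfF i c)
      hAHA (fun i => hFw i c) fun i => eventually_of_mem hU fun z hz => hrel i c z hz
  have hana : ∀ i j, ∀ᶠ z in 𝓝 0, AnalyticAt ℂ (HA i j) (zeroBelowSnd n p (conjDiag _ z)) :=
    fun i j => tendsto_zeroBelowSnd_conjDiag_nhds_zero.eventually (hHA i j).eventually_analyticAt
  obtain ⟨ε, hε, hball⟩ := Metric.eventually_nhds_iff_ball.1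
    ((eventually_all.2 fun i => eventually_all.2 (hana i)).and
      (eventually_all.2 fun c => eventually_all.2 (hrel' c)))
  have hsub : polydisc n (min η ε) ⊆ ball 0 ε := by
    rw [polydisc_eq_ball (lt_min hη hε)]
    exact ball_subset_ball (min_le_right _ _)
  refine ⟨min η ε, lt_min hη hε, min_le_left _ _,
    fun z => Matrix.of fun i j => HA i j (zeroBelowSnd n p (conjDiag _ z)),
    fun i j z hz => ?_, fun i j z hz k hk => ?_, fun i c z hz => (hball z (hsub hz)).2 c i⟩
  · exact (((hball z (hsub hz)).1 i j).restrictScalars.comp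
      (((zeroBelowSnd n p).restrictScalars ℝ).analyticAt _)).comp ((conjDiag _).analyticAt z)
  · exact dbarj_comp_zeroBelowSnd_conjDiag ((hball z (hsub hz)).1 i j).differentiableAt hk
end
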